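/- If ℓ is a natural number divisible by 8, then there exists a level-ℓ junior ghost datum on the theta graph (namely the scaling of the level-8 datum (1, 3, 2, 2, 2, 2) by k = ℓ/8). -/

import Mathlib

/-- The operation `a ⊙ m := a * m / gcd(m, ℓ)` (exact division since `gcd(m, ℓ) ∣ m`). -/
def odot (ℓ a m : ℕ) : ℕ := a * m / Nat.gcd m ℓ

/-- A level-`ℓ` junior ghost datum on the theta graph (two vertices joined by three
edges, edges 1 and 3 oriented from the first vertex to the second, edge 2 opposite). -/
def IsJuniorGhostDatum (ℓ m₁ m₂ m₃ a₁ a₂ a₃ : ℕ) : Prop :=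
  m₁ < ℓ ∧ m₂ < ℓ ∧ m₃ < ℓ ∧
  1 ≤ a₁ ∧ a₁ < ℓ ∧ 1 ≤ a₂ ∧ a₂ < ℓ ∧ 1 ≤ a₃ ∧ a₃ < ℓ ∧
  m₂ ≡ m₁ + m₃ [MOD ℓ] ∧
  Nat.gcd m₁ ℓ ∣ a₁ ∧ Nat.gcd m₂ ℓ ∣ a₂ ∧ Nat.gcd m₃ ℓ ∣ a₃ ∧
  odot ℓ a₁ m₁ ≡ odot ℓ a₃ m₃ [MOD ℓ] ∧
  odot ℓ a₁ m₁ + odot ℓ a₂ m₂ ≡ 0 [MOD ℓ] ∧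
  a₁ + a₂ + a₃ < ℓ

theorem odot_mul_mul (k ℓ a m : ℕ) : odot (k * ℓ) (k * a) (k * m) = k * odot ℓ a m := by
  rcases k.eq_zero_or_pos with rfl | hk
  · simp [odot]
  have hdvd : Nat.gcd m ℓ ∣ a * m := (Nat.gcd_dvd_left m ℓ).mul_left a
  calc odot (k * ℓ) (k * a) (k * m)
      = k * (k * (a * m)) / (k * Nat.gcd m ℓ) := by
        rw [odot, Nat.gcd_mul_left]; ring_nf
    _ = k * odot ℓ a m := by
        rw [Nat.mul_div_mul_left _ _ hk, Nat.mul_div_assoc _ hdvd, odot]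

theorem IsJuniorGhostDatum.mul {ℓ m₁ m₂ m₃ a₁ a₂ a₃ k : ℕ} (hk : 0 < k)
    (h : IsJuniorGhostDatum ℓ m₁ m₂ m₃ a₁ a₂ a₃) :
    IsJuniorGhostDatum (k * ℓ) (k * m₁) (k * m₂) (k * m₃) (k * a₁) (k * a₂) (k * a₃) := by
  obtain ⟨hm₁, hm₂, hm₃, ha₁, ha₁', ha₂, ha₂', ha₃, ha₃', hker, hg₁, hg₂, hg₃, him₁, him₂,
    hage⟩ := h
  simp only [IsJuniorGhostDatum, odot_mul_mul, Nat.gcd_mul_left]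
  refine ⟨Nat.mul_lt_mul_of_pos_left hm₁ hk, Nat.mul_lt_mul_of_pos_left hm₂ hk,
    Nat.mul_lt_mul_of_pos_left hm₃ hk, Nat.one_le_iff_ne_zero.mpr ?_,
    Nat.mul_lt_mul_of_pos_left ha₁' hk, Nat.one_le_iff_ne_zero.mpr ?_,
    Nat.mul_lt_mul_of_pos_left ha₂' hk, Nat.one_le_iff_ne_zero.mpr ?_,
    Nat.mul_lt_mul_of_pos_left ha₃' hk, ?_, Nat.mul_dvd_mul_left k hg₁,
    Nat.mul_dvd_mul_left k hg₂, Nat.mul_dvd_mul_left k hg₃, him₁.mul_left' k, ?_, ?_⟩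
  · positivity
  · positivity
  · positivity
  · simpa only [mul_add] using hker.mul_left' k
  · simpa only [mul_add, mul_zero] using him₂.mul_left' k
  · simpa only [mul_add] using Nat.mul_lt_mul_of_pos_left hage hk

theorem isJuniorGhostDatum_eight : IsJuniorGhostDatum 8 1 3 2 2 2 2 := by
  unfold IsJuniorGhostDatum odot; decide

theorem exists_junior_ghost_datum_of_eight_dvd (ℓ : ℕ) (hℓ : 0 < ℓ) (h : 8 ∣ ℓ) :
    IsJuniorGhostDatum ℓ (ℓ / 8 * 1) (ℓ / 8 * 3) (ℓ / 8 * 2) (ℓ / 8 * 2) (ℓ / 8 * 2)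
      (ℓ / 8 * 2) := by
  obtain ⟨k, rfl⟩ := h
  have hk : 0 < k := by omega
  rw [Nat.mul_div_cancel_left k (by norm_num), mul_comm 8 k]
  exact isJuniorGhostDatum_eight.mul hk
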